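/- arXiv:1110.3493 — 2 statements merged into one kernel-verified Lean document; each statement's English description precedes it below -/
import Mathlib

section
/- For every positive integer k and complex x with |x| ≤ 1: ∑_{ν=2}^{k+1} (k+2−ν) ∑_{m,n≥1} x^n/(n^{k+3−ν}(m+n)^ν) − ∑_{m,n≥1} x^n/(m²(m+n)^{k+1}) − (k+1) ∑_{m,n≥1} x^{m+n}/(m(m+n)^{k+2}) = (k+1) ∑_{n≥1} x^n/n^{k+3} − ζ(2) ∑_{n≥1} x^n/n^{k+1}. -/
/-!
Write `m = p.1 + 1` and `n = p.2 + 1`. The numbers `u = 1/n`, `v = 1/(m+n)`, `w = 1/m` satisfy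
`u v = w (u - v)`, and this partial-fraction relation collapses the `ν`-sum: the summand of the
first series minus that of the second, plus `x^n / (m² n^{k+1})`, equals
`(k+1) x^n / n^{k+2} · (1/m - 1/(m+n))`. Summing over `m` telescopes to the harmonic number
`H_n`, and the added series is `ζ(2) Li_{k+1}(x)`. Grouping the third series along the
antidiagonals `m + n = N` gives `∑ x^N H_{N-1} / N^{k+2}`, so `H_n - H_{n-1} = 1/n` leaves
`(k+1) Li_{k+3}(x)`. Every double series is dominated by `∑ 1/(m² n²)`, which justifies all the
rearrangements.
-/

open Filter Topology Finset

section PartialFractions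

variable {R : Type*} [CommRing R] {u v w : R}

theorem sum_Icc_pow_mul_pow_of_mul_eq (h : u * v = w * (u - v)) (k : ℕ) :
    ∑ ν ∈ Icc 2 (k + 1), u ^ (k + 2 - ν) * v ^ ν = w * v * (u ^ k - v ^ k) := by
  induction k with
  | zero => simp
  | succ k ih =>
    have hshift : ∑ ν ∈ Icc 2 (k + 1), u ^ (k + 1 + 2 - ν) * v ^ ν
        = u * ∑ ν ∈ Icc 2 (k + 1), u ^ (k + 2 - ν) * v ^ ν := by
      rw [mul_sum]
      refine sum_congr rfl fun ν hν => ?_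
      rw [show k + 1 + 2 - ν = k + 2 - ν + 1 by grind]
      ring
    rw [sum_Icc_succ_top (by omega), hshift, ih, show k + 1 + 2 - (k + 2) = 1 by omega]
    linear_combination v ^ (k + 1) * h

theorem sum_Icc_natCast_mul_pow_mul_pow_of_mul_eq (h : u * v = w * (u - v)) (k : ℕ) :
    ∑ ν ∈ Icc 2 (k + 1), ((k + 2 - ν : ℕ) : R) * (u ^ (k + 3 - ν) * v ^ ν) + w ^ 2 * u ^ (k + 1)
      = w ^ 2 * v ^ (k + 1) + (k + 1) * (w - v) * u ^ (k + 2) := by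
  induction k with
  | zero =>
    rw [Icc_eq_empty (by norm_num), sum_empty]
    push_cast
    linear_combination (u - w) * h
  | succ k ih =>
    have hshift : ∑ ν ∈ Icc 2 (k + 1), ((k + 1 + 2 - ν : ℕ) : R) * (u ^ (k + 1 + 3 - ν) * v ^ ν)
        = u * ∑ ν ∈ Icc 2 (k + 1), ((k + 2 - ν : ℕ) : R) * (u ^ (k + 3 - ν) * v ^ ν)
          + u ^ 2 * ∑ ν ∈ Icc 2 (k + 1), u ^ (k + 2 - ν) * v ^ ν := by
      rw [mul_sum, mul_sum, ← sum_add_distrib]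
      refine sum_congr rfl fun ν hν => ?_
      rw [show k + 1 + 2 - ν = k + 2 - ν + 1 by grind, show k + 1 + 3 - ν = k + 2 - ν + 2 by grind]
      push_cast
      ring
    rw [sum_Icc_succ_top (by omega), hshift, sum_Icc_pow_mul_pow_of_mul_eq h,
      show k + 1 + 2 - (k + 2) = 1 by omega, show k + 1 + 3 - (k + 2) = 2 by omega]
    push_cast
    linear_combination ih * u + (u ^ (k + 2) + (u - w) * v ^ (k + 1)) * h

theorem sum_Icc_natCast_div_pow_mul_pow {K : Type*} [Field K] (k : ℕ) {m n : K} (hm : m ≠ 0)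
    (hn : n ≠ 0) (hmn : m + n ≠ 0) :
    ∑ ν ∈ Icc 2 (k + 1), ((k + 2 - ν : ℕ) : K) / (n ^ (k + 3 - ν) * (m + n) ^ ν)
        + 1 / m ^ 2 * (1 / n ^ (k + 1))
      = 1 / (m ^ 2 * (m + n) ^ (k + 1)) + (k + 1) / n ^ (k + 2) * (1 / m - 1 / (m + n)) := by
  have h : n⁻¹ * (m + n)⁻¹ = m⁻¹ * (n⁻¹ - (m + n)⁻¹) := by field_simp; ring
  have key := sum_Icc_natCast_mul_pow_mul_pow_of_mul_eq h k
  simp only [inv_pow, ← mul_inv] at key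
  simp only [div_eq_mul_inv, one_mul, mul_inv] at key ⊢
  linear_combination key

theorem sum_Icc_natCast_mul_pow_div_sub_add (x : ℂ) (k m n : ℕ) :
    ∑ ν ∈ Icc 2 (k + 1), ((k + 2 - ν : ℕ) : ℂ) * (x ^ (n + 1) /
        (((n : ℂ) + 1) ^ (k + 3 - ν) * ((m : ℂ) + 1 + ((n : ℂ) + 1)) ^ ν))
      - x ^ (n + 1) / (((m : ℂ) + 1) ^ 2 * ((m : ℂ) + 1 + ((n : ℂ) + 1)) ^ (k + 1))
      + 1 / ((m : ℂ) + 1) ^ 2 * (x ^ (n + 1) / ((n : ℂ) + 1) ^ (k + 1))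
      = ((k : ℂ) + 1) * (x ^ (n + 1) / ((n : ℂ) + 1) ^ (k + 2))
        * (1 / ((m : ℂ) + 1) - 1 / ((m : ℂ) + 1 + ((n : ℂ) + 1))) := by
  have hmn : (m : ℂ) + 1 + ((n : ℂ) + 1) ≠ 0 := by norm_cast
  have key := sum_Icc_natCast_div_pow_mul_pow k (Nat.cast_add_one_ne_zero m)
    (Nat.cast_add_one_ne_zero n) hmn
  simp only [mul_div_left_comm _ (x ^ (n + 1))]
  rw [← mul_sum]
  linear_combination x ^ (n + 1) * key

end PartialFractions

section Rearrangement

theorem HasSum.sum_antidiagonal {α : Type*} [AddCommMonoid α] [TopologicalSpace α]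
    [ContinuousAdd α] [RegularSpace α] {f : ℕ × ℕ → α} {a : α} (h : HasSum f a) :
    HasSum (fun n => ∑ p ∈ antidiagonal n, f p) a :=
  (HasAntidiagonal.sigmaAntidiagonalEquivProd.hasSum_iff.2 h).sigma fun n =>
    (antidiagonal n).hasSum f

theorem hasSum_sub_add_of_antitone {f : ℕ → ℝ} (hf : Antitone f) (h0 : Tendsto f atTop (𝓝 0))
    (N : ℕ) : HasSum (fun m => f m - f (m + N)) (∑ i ∈ range N, f i) := by
  refine (hasSum_iff_tendsto_nat_of_nonneg (fun m => sub_nonneg.2 (hf (by omega))) _).2 ?_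
  have hpartial (M : ℕ) : ∑ m ∈ range M, (f m - f (m + N))
      = ∑ i ∈ range N, f i - ∑ i ∈ range N, f (M + i) := by
    have h1 := sum_range_add f M N
    have h2 := sum_range_add f N M
    simp only [add_comm N] at h2
    rw [sum_sub_distrib]
    linear_combination h2 - h1
  simp_rw [hpartial]
  simpa using tendsto_const_nhds.sub
    (tendsto_finsetSum (range N) fun i _ => h0.comp (tendsto_add_atTop_nat i))

theorem hasSum_one_div_add_one_sub (N : ℕ) :
    HasSum (fun m : ℕ => 1 / ((m : ℂ) + 1) - 1 / ((m : ℂ) + 1 + N)) (harmonic N) := by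
  have h := hasSum_sub_add_of_antitone (f := fun m : ℕ => 1 / ((m : ℝ) + 1))
    (fun a b hab => by dsimp only; gcongr) tendsto_one_div_add_atTop_nhds_zero_nat N
  convert Complex.hasSum_ofReal.2 h using 1
  · ext m; push_cast; ring
  · simp [harmonic]

theorem hasSum_mul_harmonic_succ_of_prod {b : ℕ → ℂ} {a : ℂ}
    (h : HasSum (fun p : ℕ × ℕ =>
      b p.2 * (1 / ((p.1 : ℂ) + 1) - 1 / ((p.1 : ℂ) + 1 + ((p.2 : ℂ) + 1)))) a) :
    HasSum (fun n => b n * harmonic (n + 1)) a :=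
  ((Equiv.prodComm ℕ ℕ).hasSum_iff.2 h).prod_fiberwise fun n =>
    ((hasSum_one_div_add_one_sub (n + 1)).mul_left (b n)).congr_fun fun m => by simp

theorem hasSum_mul_harmonic_of_prod {b : ℕ → ℂ} {a : ℂ}
    (h : HasSum (fun p : ℕ × ℕ => b (p.1 + p.2 + 1) / ((p.1 : ℂ) + 1)) a) :
    HasSum (fun n => b n * harmonic n) a := by
  have hfiber (N : ℕ) : ∑ p ∈ antidiagonal N, b (p.1 + p.2 + 1) / ((p.1 : ℂ) + 1)
      = b (N + 1) * harmonic (N + 1) := by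
    rw [sum_congr rfl fun p hp => by rw [mem_antidiagonal.1 hp, div_eq_mul_one_div], ← mul_sum,
      Nat.sum_antidiagonal_eq_sum_range_succ_mk]
    simp [harmonic]
  refine (hasSum_nat_add_iff' 1).1 ?_
  simpa [hfiber] using h.sum_antidiagonal

end Rearrangement

section Summability

variable {x : ℂ} {k : ℕ}

theorem summable_one_div_add_one_sq : Summable fun n : ℕ => 1 / ((n : ℝ) + 1) ^ 2 := by
  simpa using (summable_nat_add_iff 1).2 (Real.summable_one_div_nat_pow.2 one_lt_two)

theorem summable_pow_div_natCast (hx : ‖x‖ ≤ 1) (e d : ℕ × ℕ → ℕ)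
    (hd : ∀ p, (p.1 + 1) ^ 2 * (p.2 + 1) ^ 2 ≤ d p) :
    Summable fun p => x ^ e p / (d p : ℂ) := by
  have hbound := summable_one_div_add_one_sq.mul_of_nonneg summable_one_div_add_one_sq
    (fun _ => by positivity) (fun _ => by positivity)
  refine (hbound.congr fun p => one_div_mul_one_div _ _).of_norm_bounded fun p => ?_
  rw [norm_div, norm_pow, Complex.norm_natCast]
  gcongr
  · exact pow_le_one₀ (norm_nonneg x) hx
  · exact_mod_cast hd p

theorem summable_norm_pow_div_pow (hx : ‖x‖ ≤ 1) {s : ℕ} (hs : 2 ≤ s) :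
    Summable fun n : ℕ => ‖x ^ (n + 1) / ((n : ℂ) + 1) ^ s‖ := by
  refine summable_one_div_add_one_sq.of_nonneg_of_le (fun _ => norm_nonneg _) fun n => ?_
  rw [norm_div, norm_pow, norm_pow, ← Nat.cast_succ, Complex.norm_natCast, Nat.cast_succ]
  gcongr
  · exact pow_le_one₀ (norm_nonneg x) hx
  · linarith [n.cast_nonneg (α := ℝ)]

theorem summable_pow_div_pow_mul_pow (hx : ‖x‖ ≤ 1) {a b : ℕ} (ha : 2 ≤ a) (hb : 2 ≤ b) :
    Summable fun p : ℕ × ℕ => x ^ (p.2 + 1) /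
      (((p.2 : ℂ) + 1) ^ a * ((p.1 : ℂ) + 1 + ((p.2 : ℂ) + 1)) ^ b) := by
  refine (summable_pow_div_natCast hx (fun p => p.2 + 1)
    (fun p => (p.2 + 1) ^ a * (p.1 + 1 + (p.2 + 1)) ^ b) fun p => ?_).congr
    fun p => by push_cast; rfl
  calc (p.1 + 1) ^ 2 * (p.2 + 1) ^ 2 = (p.2 + 1) ^ 2 * (p.1 + 1) ^ 2 := mul_comm _ _
    _ ≤ (p.2 + 1) ^ a * (p.1 + 1 + (p.2 + 1)) ^ 2 :=
        Nat.mul_le_mul (Nat.pow_le_pow_right (by omega) ha) (Nat.pow_le_pow_left (by omega) 2)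
    _ ≤ (p.2 + 1) ^ a * (p.1 + 1 + (p.2 + 1)) ^ b :=
        Nat.mul_le_mul_left _ (Nat.pow_le_pow_right (by omega) hb)

theorem summable_pow_div_sq_mul_pow (hx : ‖x‖ ≤ 1) (hk : 1 ≤ k) :
    Summable fun p : ℕ × ℕ => x ^ (p.2 + 1) /
      (((p.1 : ℂ) + 1) ^ 2 * ((p.1 : ℂ) + 1 + ((p.2 : ℂ) + 1)) ^ (k + 1)) := by
  refine (summable_pow_div_natCast hx (fun p => p.2 + 1)
    (fun p => (p.1 + 1) ^ 2 * (p.1 + 1 + (p.2 + 1)) ^ (k + 1)) fun p => ?_).congr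
    fun p => by push_cast; rfl
  calc (p.1 + 1) ^ 2 * (p.2 + 1) ^ 2 ≤ (p.1 + 1) ^ 2 * (p.1 + 1 + (p.2 + 1)) ^ 2 :=
        Nat.mul_le_mul_left _ (Nat.pow_le_pow_left (by omega) 2)
    _ ≤ (p.1 + 1) ^ 2 * (p.1 + 1 + (p.2 + 1)) ^ (k + 1) :=
        Nat.mul_le_mul_left _ (Nat.pow_le_pow_right (by omega) (by omega))

theorem summable_pow_add_div_mul_pow (hx : ‖x‖ ≤ 1) (hk : 1 ≤ k) :
    Summable fun p : ℕ × ℕ => x ^ (p.1 + 1 + (p.2 + 1)) /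
      (((p.1 : ℂ) + 1) * ((p.1 : ℂ) + 1 + ((p.2 : ℂ) + 1)) ^ (k + 2)) := by
  refine (summable_pow_div_natCast hx (fun p => p.1 + 1 + (p.2 + 1))
    (fun p => (p.1 + 1) * (p.1 + 1 + (p.2 + 1)) ^ (k + 2)) fun p => ?_).congr
    fun p => by push_cast; rfl
  calc (p.1 + 1) ^ 2 * (p.2 + 1) ^ 2 = (p.1 + 1) * ((p.1 + 1) * (p.2 + 1) ^ 2) := by ring
    _ ≤ (p.1 + 1) * ((p.1 + 1 + (p.2 + 1)) * (p.1 + 1 + (p.2 + 1)) ^ 2) :=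
        Nat.mul_le_mul_left _ (Nat.mul_le_mul (by omega) (Nat.pow_le_pow_left (by omega) 2))
    _ ≤ (p.1 + 1) * (p.1 + 1 + (p.2 + 1)) ^ (k + 2) := by
        rw [← pow_succ']
        exact Nat.mul_le_mul_left _ (Nat.pow_le_pow_right (by omega) (by omega))

theorem hasSum_riemannZeta_two_mul (hx : ‖x‖ ≤ 1) (hk : 1 ≤ k) :
    HasSum (fun p : ℕ × ℕ => 1 / ((p.1 : ℂ) + 1) ^ 2 * (x ^ (p.2 + 1) / ((p.2 : ℂ) + 1) ^ (k + 1)))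
      (riemannZeta 2 * ∑' n : ℕ, x ^ (n + 1) / ((n : ℂ) + 1) ^ (k + 1)) := by
  have hzeta : Summable fun n : ℕ => ‖1 / ((n : ℂ) + 1) ^ 2‖ := by
    simpa using summable_norm_pow_div_pow (x := 1) (by simp) le_rfl
  have hpoly := summable_norm_pow_div_pow hx (s := k + 1) (by omega)
  simp_rw [zeta_eq_tsum_one_div_nat_add_one_cpow (s := 2) (by norm_num), Complex.cpow_ofNat,
    tsum_mul_tsum_of_summable_norm hzeta hpoly]
  exact (summable_mul_of_summable_norm hzeta hpoly).hasSum

end Summability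

theorem proposition_3_1 (k : ℕ) (hk : 1 ≤ k) (x : ℂ) (hx : ‖x‖ ≤ 1) :
    (∑ ν ∈ Finset.Icc 2 (k + 1), ((k + 2 - ν : ℕ) : ℂ) * ∑' p : ℕ × ℕ,
        x ^ (p.2 + 1) /
          (((p.2 : ℂ) + 1) ^ (k + 3 - ν) * ((p.1 : ℂ) + 1 + ((p.2 : ℂ) + 1)) ^ ν))
      - (∑' p : ℕ × ℕ, x ^ (p.2 + 1) /
          (((p.1 : ℂ) + 1) ^ 2 * ((p.1 : ℂ) + 1 + ((p.2 : ℂ) + 1)) ^ (k + 1)))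
      - ((k : ℂ) + 1) * (∑' p : ℕ × ℕ, x ^ (p.1 + 1 + (p.2 + 1)) /
          (((p.1 : ℂ) + 1) * ((p.1 : ℂ) + 1 + ((p.2 : ℂ) + 1)) ^ (k + 2)))
      = ((k : ℂ) + 1) * (∑' n : ℕ, x ^ (n + 1) / ((n : ℂ) + 1) ^ (k + 3))
        - riemannZeta 2 * ∑' n : ℕ, x ^ (n + 1) / ((n : ℂ) + 1) ^ (k + 1) := by
  set c : ℕ → ℂ := fun n => x ^ (n + 1) / ((n : ℂ) + 1) ^ (k + 2) with hc
  have hA := hasSum_sum (s := Icc 2 (k + 1)) fun ν hν => (summable_pow_div_pow_mul_pow hx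
    (a := k + 3 - ν) (b := ν) (by grind) (by grind)).hasSum.mul_left ((k + 2 - ν : ℕ) : ℂ)
  have hE := hasSum_mul_harmonic_succ_of_prod (b := fun n => ((k : ℂ) + 1) * c n)
    ((hA.sub (summable_pow_div_sq_mul_pow hx hk).hasSum).add (hasSum_riemannZeta_two_mul hx hk)
      |>.congr_fun fun p => (sum_Icc_natCast_mul_pow_div_sub_add x k p.1 p.2).symm)
  have hC := hasSum_mul_harmonic_of_prod (b := c)
    ((summable_pow_add_div_mul_pow hx hk).hasSum.congr_fun fun p => by
      simp only [hc]; push_cast; field_simp; ring)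
  have hL := (summable_norm_pow_div_pow hx (s := k + 3) (by omega)).of_norm.hasSum.mul_left
    ((k : ℂ) + 1)
  have hdiff (n : ℕ) : (k + 1) * c n * harmonic (n + 1) - (k + 1) * (c n * harmonic n)
      = ((k : ℂ) + 1) * (x ^ (n + 1) / ((n : ℂ) + 1) ^ (k + 3)) := by
    simp only [hc, harmonic_succ]
    push_cast
    field_simp
    ring
  linear_combination (hE.sub (hC.mul_left ((k : ℂ) + 1))).unique (hL.congr_fun hdiff)
end

section
/- For every integer k ≥ 3: ∑_{ν=3}^{k} (ν(ν−1)/2) ζ₂(k+3−ν, ν+1) + ((k+1)(k+2)/2) ζ₂(2, k+2) + (k+1)(k+2) ζ₂(1, k+3) = ζ(k+4). -/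
open scoped BigOperators

/-- Double zeta value `ζ₂(k₁,k₂) = ∑_{1 ≤ m < m+n} 1/(m^{k₁} (m+n)^{k₂})`. -/
noncomputable def zeta2 (k1 k2 : ℕ) : ℂ :=
  ∑' p : ℕ × ℕ, 1 / (((p.1 : ℂ) + 1) ^ k1 * ((p.1 : ℂ) + 1 + ((p.2 : ℂ) + 1)) ^ k2)

/-!
Write `n = m + d` with `m, d ≥ 1`. Euler's partial-fraction decomposition of `1 / (m^(k+1) d^3)`
into terms `1 / (m^i n^j)` and `1 / (d^j n^i)`, summed over all pairs `(m, d)`, expresses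
`ζ(k+1) ζ(3)` as a combination of double zeta values. Splitting the same double series along
`m < d`, `m > d` and `m = d` gives `ζ₂(k+1,3) + ζ₂(3,k+1) + ζ(k+4)` instead. Comparing the two,
`ζ₂(k+1,3)` and `ζ₂(3,k+1)` cancel and the formula remains.
-/

open Finset

noncomputable def pairTerm (i j l : ℕ) (p : ℕ × ℕ) : ℝ :=
  1 / (((p.1 : ℝ) + 1) ^ i * ((p.2 : ℝ) + 1) ^ j * ((p.1 : ℝ) + 1 + ((p.2 : ℝ) + 1)) ^ l)

noncomputable def zeta2Real (a b : ℕ) : ℝ := ∑' p, pairTerm a 0 b p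

lemma sq_mul_sq_le_pow_mul_pow_mul_add_pow {m d : ℝ} (hm : 1 ≤ m) (hd : 1 ≤ d) {i j l : ℕ}
    (h : 2 - i + (2 - j) ≤ l) : m ^ 2 * d ^ 2 ≤ m ^ i * d ^ j * (m + d) ^ l := by
  have hm' : m ^ 2 ≤ m ^ i * m ^ (2 - i) := by
    rw [← pow_add]; exact pow_le_pow_right₀ hm (by omega)
  have hd' : d ^ 2 ≤ d ^ j * d ^ (2 - j) := by
    rw [← pow_add]; exact pow_le_pow_right₀ hd (by omega)
  have hn : m ^ (2 - i) * d ^ (2 - j) ≤ (m + d) ^ l :=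
    calc m ^ (2 - i) * d ^ (2 - j) ≤ (m + d) ^ (2 - i) * (m + d) ^ (2 - j) := by
          gcongr <;> linarith
      _ = (m + d) ^ (2 - i + (2 - j)) := (pow_add _ _ _).symm
      _ ≤ (m + d) ^ l := pow_le_pow_right₀ (by linarith) h
  calc m ^ 2 * d ^ 2 ≤ (m ^ i * m ^ (2 - i)) * (d ^ j * d ^ (2 - j)) := by gcongr
    _ = m ^ i * d ^ j * (m ^ (2 - i) * d ^ (2 - j)) := by ring
    _ ≤ m ^ i * d ^ j * (m + d) ^ l := by gcongr

lemma summable_one_div_add_one_pow {s : ℕ} (hs : 1 < s) :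
    Summable fun n : ℕ => 1 / ((n : ℝ) + 1) ^ s := by
  have := (Real.summable_one_div_nat_add_rpow 1 s).mpr (by exact_mod_cast hs)
  refine this.congr fun n => ?_
  rw [abs_of_nonneg (by positivity), Real.rpow_natCast]

lemma summable_pairTerm {i j l : ℕ} (h : 2 - i + (2 - j) ≤ l) : Summable (pairTerm i j l) := by
  have hsq : Summable fun p : ℕ × ℕ => 1 / ((p.1 : ℝ) + 1) ^ 2 * (1 / ((p.2 : ℝ) + 1) ^ 2) :=
    (summable_one_div_add_one_pow one_lt_two).mul_of_nonneg
      (summable_one_div_add_one_pow one_lt_two)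
      (fun _ => by positivity) fun _ => by positivity
  refine hsq.of_nonneg_of_le (fun p => by unfold pairTerm; positivity) fun p => ?_
  rw [div_mul_div_comm, one_mul, pairTerm]
  have hm : (1 : ℝ) ≤ (p.1 : ℝ) + 1 := by simp
  have hd : (1 : ℝ) ≤ (p.2 : ℝ) + 1 := by simp
  exact one_div_le_one_div_of_le (by positivity) (sq_mul_sq_le_pow_mul_pow_mul_add_pow hm hd h)

lemma tsum_pairTerm_comm (i j l : ℕ) : ∑' p, pairTerm i j l p = ∑' p, pairTerm j i l p := by
  rw [← (Equiv.prodComm ℕ ℕ).tsum_eq]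
  refine tsum_congr fun p => ?_
  simp only [pairTerm, Equiv.prodComm_apply, Prod.fst_swap, Prod.snd_swap]
  ring

lemma hasSum_pairTerm_zeta2Real {a b : ℕ} (h : 2 - a + 2 ≤ b) :
    HasSum (pairTerm a 0 b) (zeta2Real a b) :=
  (summable_pairTerm h).hasSum

lemma hasSum_pairTerm_zero_zeta2Real {a b : ℕ} (h : 2 + (2 - a) ≤ b) :
    HasSum (pairTerm 0 a b) (zeta2Real a b) := by
  rw [zeta2Real, ← tsum_pairTerm_comm]
  exact (summable_pairTerm h).hasSum

lemma one_div_pow_mul_pow_three_eq_sum (k : ℕ) {m d : ℝ} (hm : 0 < m) (hd : 0 < d) :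
    1 / (m ^ (k + 1) * d ^ 3) =
      ∑ ν ∈ Icc 2 (k + 2), (ν : ℝ) * ((ν : ℝ) - 1) / 2 / (m ^ (k + 3 - ν) * (m + d) ^ (ν + 1))
        + 1 / (d ^ 3 * (m + d) ^ (k + 1)) + ((k : ℝ) + 1) / (d ^ 2 * (m + d) ^ (k + 2))
        + ((k : ℝ) + 1) * ((k : ℝ) + 2) / 2 / (d * (m + d) ^ (k + 3)) := by
  have hn : 0 < m + d := by linarith
  induction k with
  | zero =>
    simp only [zero_add, Icc_self, sum_singleton]
    field_simp
    ring
  | succ k ih =>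
    have hshift : ∀ ν ∈ Icc 2 (k + 2),
        (ν : ℝ) * ((ν : ℝ) - 1) / 2 / (m ^ (k + 1 + 3 - ν) * (m + d) ^ (ν + 1)) =
          1 / m * ((ν : ℝ) * ((ν : ℝ) - 1) / 2 / (m ^ (k + 3 - ν) * (m + d) ^ (ν + 1))) := by
      intro ν hν
      rw [show k + 1 + 3 - ν = k + 3 - ν + 1 by have := mem_Icc.mp hν; omega, pow_succ]
      field_simp
    rw [sum_Icc_succ_top (by omega), sum_congr rfl hshift, ← mul_sum,
      show k + 1 + 3 - (k + 2 + 1) = 1 by omega]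
    linear_combination (norm := skip) 1 / m * ih
    push_cast
    field_simp
    ring

def stuffleSplit : (ℕ × ℕ) ⊕ (ℕ × ℕ) ⊕ ℕ → ℕ × ℕ :=
  Sum.elim (fun q => (q.1, q.1 + q.2 + 1)) <|
    Sum.elim (fun q => (q.1 + q.2 + 1, q.1)) fun n => (n, n)

lemma stuffleSplit_bijective : Function.Bijective stuffleSplit := by
  constructor
  · rintro (⟨a, a'⟩ | ⟨a, a'⟩ | a) (⟨b, b'⟩ | ⟨b, b'⟩ | b) h <;>
      simp only [stuffleSplit, Sum.elim_inl, Sum.elim_inr, Prod.mk.injEq, Sum.inl.injEq,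
        Sum.inr.injEq, reduceCtorEq] at h ⊢ <;> omega
  · rintro ⟨x, y⟩
    rcases lt_trichotomy x y with h | rfl | h
    · refine ⟨.inl (x, y - x - 1), ?_⟩
      simp only [stuffleSplit, Sum.elim_inl]
      congr
      omega
    · exact ⟨.inr (.inr x), rfl⟩
    · refine ⟨.inr (.inl (y, x - y - 1)), ?_⟩
      simp only [stuffleSplit, Sum.elim_inl, Sum.elim_inr]
      congr
      omega

lemma tsum_pairTerm_stuffle {a b : ℕ} (ha : 2 ≤ a) (hb : 2 ≤ b) :
    ∑' p, pairTerm a b 0 p =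
      zeta2Real a b + zeta2Real b a + ∑' n : ℕ, 1 / ((n : ℝ) + 1) ^ (a + b) := by
  have hlt : HasSum (pairTerm a b 0 ∘ stuffleSplit ∘ Sum.inl) (zeta2Real a b) := by
    convert hasSum_pairTerm_zeta2Real (a := a) (b := b) (by omega) using 1
    funext q
    simp only [Function.comp_apply, stuffleSplit, Sum.elim_inl, pairTerm]
    push_cast
    ring
  have hgt : HasSum (pairTerm a b 0 ∘ stuffleSplit ∘ Sum.inr ∘ Sum.inl) (zeta2Real b a) := by
    convert hasSum_pairTerm_zeta2Real (a := b) (b := a) (by omega) using 1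
    funext q
    simp only [Function.comp_apply, stuffleSplit, Sum.elim_inl, Sum.elim_inr, pairTerm]
    push_cast
    ring
  have heq : HasSum (pairTerm a b 0 ∘ stuffleSplit ∘ Sum.inr ∘ Sum.inr)
      (∑' n : ℕ, 1 / ((n : ℝ) + 1) ^ (a + b)) := by
    convert (summable_one_div_add_one_pow (s := a + b) (by omega)).hasSum using 1
    funext n
    simp only [Function.comp_apply, stuffleSplit, Sum.elim_inr, pairTerm]
    ring
  have hsplit := (Equiv.ofBijective _ stuffleSplit_bijective).hasSum_iff.mp
    (HasSum.sum (f := pairTerm a b 0 ∘ stuffleSplit) hlt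
      (HasSum.sum (f := pairTerm a b 0 ∘ stuffleSplit ∘ Sum.inr) hgt heq))
  rw [hsplit.tsum_eq, add_assoc]

lemma tsum_pairTerm_euler_decomposition {k : ℕ} (hk : 1 ≤ k) :
    ∑' p, pairTerm (k + 1) 3 0 p =
      ∑ ν ∈ Icc 2 (k + 2), (ν : ℝ) * ((ν : ℝ) - 1) / 2 * zeta2Real (k + 3 - ν) (ν + 1)
        + zeta2Real 3 (k + 1) + ((k : ℝ) + 1) * zeta2Real 2 (k + 2)
        + ((k : ℝ) + 1) * ((k : ℝ) + 2) / 2 * zeta2Real 1 (k + 3) := by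
  have hterm : ∀ p, pairTerm (k + 1) 3 0 p =
      ∑ ν ∈ Icc 2 (k + 2), (ν : ℝ) * ((ν : ℝ) - 1) / 2 * pairTerm (k + 3 - ν) 0 (ν + 1) p
        + pairTerm 0 3 (k + 1) p + ((k : ℝ) + 1) * pairTerm 0 2 (k + 2) p
        + ((k : ℝ) + 1) * ((k : ℝ) + 2) / 2 * pairTerm 0 1 (k + 3) p := fun p => by
    simp only [pairTerm, pow_zero, mul_one, one_mul, pow_one, mul_one_div]
    exact one_div_pow_mul_pow_three_eq_sum k (by positivity) (by positivity)
  rw [tsum_congr hterm]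
  apply HasSum.tsum_eq
  refine (((hasSum_sum fun ν hν => .mul_left _ ?_).add ?_).add (.mul_left _ ?_)).add
    (.mul_left _ ?_)
  · exact hasSum_pairTerm_zeta2Real (by have := mem_Icc.mp hν; omega)
  all_goals exact hasSum_pairTerm_zero_zeta2Real (by omega)

lemma sum_Icc_two_add_two {M : Type*} [AddCommMonoid M] (f : ℕ → M) {k : ℕ} (hk : 2 ≤ k) :
    ∑ ν ∈ Icc 2 (k + 2), f ν = f 2 + ∑ ν ∈ Icc 3 k, f ν + f (k + 1) + f (k + 2) := by
  rw [sum_Icc_succ_top (by omega), sum_Icc_succ_top (by omega), Icc_eq_cons_Ioc (by omega),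
    sum_cons, ← Icc_add_one_left_eq_Ioc]
  rfl

lemma zeta2Real_sum_formula {k : ℕ} (hk : 2 ≤ k) :
    ∑ ν ∈ Icc 3 k, (ν : ℝ) * ((ν : ℝ) - 1) / 2 * zeta2Real (k + 3 - ν) (ν + 1)
      + ((k : ℝ) + 1) * ((k : ℝ) + 2) / 2 * zeta2Real 2 (k + 2)
      + ((k : ℝ) + 1) * ((k : ℝ) + 2) * zeta2Real 1 (k + 3)
      = ∑' n : ℕ, 1 / ((n : ℝ) + 1) ^ (k + 4) := by
  have h := (tsum_pairTerm_euler_decomposition (k := k) (by omega)).symm.trans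
    (tsum_pairTerm_stuffle (a := k + 1) (b := 3) (by omega) (by omega))
  rw [sum_Icc_two_add_two _ hk, show k + 3 - 2 = k + 1 by omega,
    show k + 3 - (k + 1) = 2 by omega, show k + 3 - (k + 2) = 1 by omega,
    show k + 1 + 3 = k + 4 by omega] at h
  push_cast at h
  linear_combination h

lemma zeta2_eq_ofReal_zeta2Real (a b : ℕ) : zeta2 a b = zeta2Real a b := by
  rw [zeta2, zeta2Real, Complex.ofReal_tsum]
  refine tsum_congr fun p => ?_
  simp only [pairTerm, pow_zero, mul_one]
  push_cast
  rfl

lemma riemannZeta_natCast_eq_ofReal_tsum {s : ℕ} (hs : 1 < s) :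
    riemannZeta s = ↑(∑' n : ℕ, 1 / ((n : ℝ) + 1) ^ s) := by
  rw [zeta_eq_tsum_one_div_nat_add_one_cpow (by simpa using hs), Complex.ofReal_tsum]
  refine tsum_congr fun n => ?_
  rw [Complex.cpow_natCast]
  push_cast
  rfl

theorem second_derivative_sum_formula (k : ℕ) (hk : 3 ≤ k) :
    (∑ ν ∈ Finset.Icc 3 k, ((ν : ℂ) * ((ν : ℂ) - 1) / 2) * zeta2 (k + 3 - ν) (ν + 1))
      + (((k : ℂ) + 1) * ((k : ℂ) + 2) / 2) * zeta2 2 (k + 2)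
      + ((k : ℂ) + 1) * ((k : ℂ) + 2) * zeta2 1 (k + 3)
      = riemannZeta (k + 4) := by
  rw [show (k : ℂ) + 4 = (k + 4 : ℕ) by push_cast; rfl,
    riemannZeta_natCast_eq_ofReal_tsum (by omega), ← zeta2Real_sum_formula (by omega)]
  simp only [zeta2_eq_ofReal_zeta2Real]
  push_cast
  rfl
end
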